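/- arXiv:1706.08835 — 6 statements merged into one kernel-verified Lean document; each statement's English description precedes it below -/
import Mathlib

section
/- For every integer k ≥ 2, π/4 = 2^(k-1) · arctan(√(2 - a_{k-1}) / a_k), where a_1 = √2 and a_k = √(2 + a_{k-1}). -/
noncomputable def nestedRad : ℕ → ℝ
  | 0 => 0
  | 1 => Real.sqrt 2
  | (n + 2) => Real.sqrt (2 + nestedRad (n + 1))

lemma pi_div_pow_pos (n : ℕ) : 0 < Real.pi / 2 ^ n :=
  div_pos Real.pi_pos (by positivity)

lemma pi_div_pow_le (n : ℕ) (hn : 1 ≤ n) : Real.pi / 2 ^ n ≤ Real.pi / 2 := by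
  apply div_le_div_of_nonneg_left Real.pi_pos.le (by norm_num)
  calc (2:ℝ) = 2^1 := by norm_num
  _ ≤ 2^n := by exact pow_le_pow_right₀ (by norm_num) hn

lemma nestedRad_eq (n : ℕ) (hn : 1 ≤ n) :
    nestedRad n = 2 * Real.cos (Real.pi / 2 ^ (n + 1)) := by
  induction n with
  | zero => omega
  | succ m ih =>
    rcases Nat.eq_or_lt_of_le hn with h | h
    · -- m + 1 = 1
      have : m = 0 := by omega
      subst this
      show Real.sqrt 2 = 2 * Real.cos (Real.pi / 2 ^ 2)
      rw [show Real.pi / 2 ^ 2 = Real.pi / 4 by ring, Real.cos_pi_div_four]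
      rw [show (2:ℝ) * (Real.sqrt 2 / 2) = Real.sqrt 2 by ring]
    · have hm : 1 ≤ m := by omega
      have ihm := ih hm
      obtain ⟨p, rfl⟩ : ∃ p, m = p + 1 := ⟨m - 1, by omega⟩
      show Real.sqrt (2 + nestedRad (p + 1)) = _
      rw [ihm]
      set θ := Real.pi / 2 ^ (p + 2) with hθ
      have hhalf : Real.pi / 2 ^ (p + 1 + 1 + 1) = θ / 2 := by
        rw [hθ]; ring
      rw [hhalf]
      have hcos : (2:ℝ) + 2 * Real.cos θ = (2 * Real.cos (θ / 2)) ^ 2 := by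
        have h := Real.cos_sq (θ/2)
        rw [show 2*(θ/2) = θ by ring] at h
        nlinarith [h]
      rw [hcos, Real.sqrt_sq]
      have h1 : 0 < θ := pi_div_pow_pos _
      have h2 : θ ≤ Real.pi / 2 := pi_div_pow_le _ (by omega)
      have : 0 ≤ Real.cos (θ / 2) := Real.cos_nonneg_of_mem_Icc ⟨by linarith, by linarith⟩
      linarith

theorem two_term_arctan_pi (k : ℕ) (hk : 2 ≤ k) :
    (2 : ℝ) ^ (k - 1) *
      Real.arctan (Real.sqrt (2 - nestedRad (k - 1)) / nestedRad k) = Real.pi / 4 := by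
  obtain ⟨n, rfl⟩ : ∃ n, k = n + 2 := ⟨k - 2, by omega⟩
  have h1 : n + 2 - 1 = n + 1 := by omega
  rw [h1, nestedRad_eq (n + 1) (by omega), nestedRad_eq (n + 2) (by omega)]
  set θ := Real.pi / 2 ^ (n + 2) with hθ
  have hhalf : Real.pi / 2 ^ (n + 2 + 1) = θ / 2 := by rw [hθ]; ring
  rw [hhalf]
  have h1' : 0 < θ := pi_div_pow_pos _
  have h2 : θ ≤ Real.pi / 2 := pi_div_pow_le _ (by omega)
  have hsin : (2:ℝ) - 2 * Real.cos θ = (2 * Real.sin (θ / 2)) ^ 2 := by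
    have h := Real.cos_sq (θ/2)
    rw [show 2*(θ/2) = θ by ring] at h
    have h2' := Real.sin_sq_add_cos_sq (θ/2)
    nlinarith [h, h2']
  rw [hsin, Real.sqrt_sq]
  · have hcospos : 0 < Real.cos (θ / 2) := by
      apply Real.cos_pos_of_mem_Ioo
      constructor <;> [linarith; linarith [Real.pi_pos]]
    have htan : 2 * Real.sin (θ / 2) / (2 * Real.cos (θ / 2)) = Real.tan (θ / 2) := by
      rw [Real.tan_eq_sin_div_cos]; field_simp
    rw [htan, Real.arctan_tan (by linarith [Real.pi_pos]) (by linarith)]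
    rw [hθ]
    field_simp
    ring
  · have : 0 ≤ Real.sin (θ / 2) :=
      Real.sin_nonneg_of_nonneg_of_le_pi (by linarith) (by linarith [Real.pi_pos])
    linarith
end

section
/- If u₁ is rational and z = ((u₁ + i)/(u₁ − i))^(2^(k−1)), then provided z ≠ i, the number u₂ = 2/(z − i) − i is real (its imaginary part is zero). -/
/-!
For real `u`, `(u + i)/(u - i) = w / conj w` with `w = u + i`, so it lies on the unit circle,
and so does its power `z`. The inversion `z ↦ (z - i)⁻¹` maps the unit circle minus `i` into
the line `im = 1/2`, hence `2/(z - i)` has imaginary part `1`.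
-/

open Complex ComplexConjugate

lemma norm_div_conj_self {w : ℂ} (hw : w ≠ 0) : ‖w / conj w‖ = 1 := by
  rw [norm_div, norm_conj, div_self (norm_ne_zero_iff.mpr hw)]

lemma ofReal_sub_I_eq_conj (x : ℝ) : (x : ℂ) - I = conj ((x : ℂ) + I) := by
  rw [map_add, conj_ofReal, conj_I, sub_eq_add_neg]

lemma norm_ofReal_add_I_div_sub_I (x : ℝ) : ‖((x : ℂ) + I) / ((x : ℂ) - I)‖ = 1 := by
  have hne : (x : ℂ) + I ≠ 0 := fun h => by simpa using congrArg im h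
  rw [ofReal_sub_I_eq_conj, norm_div_conj_self hne]

lemma im_inv_sub_I_of_norm_eq_one {z : ℂ} (hz : ‖z‖ = 1) (hzI : z ≠ I) :
    (z - I)⁻¹.im = 1 / 2 := by
  have hcircle : z.re * z.re + z.im * z.im = 1 := by
    rw [← normSq_apply, ← Complex.sq_norm, hz, one_pow]
  have hden : normSq (z - I) = 2 * (1 - z.im) := by
    simp only [normSq_apply, sub_re, sub_im, I_re, I_im, sub_zero]
    linear_combination hcircle
  have hden_pos : 0 < 1 - z.im := by
    have := normSq_pos.mpr (sub_ne_zero.mpr hzI)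
    rw [hden] at this
    linarith
  rw [inv_im, hden, sub_im, I_im]
  field_simp [hden_pos.ne']
  ring

theorem u2_is_real_general (u₁ : ℚ) (k : ℕ) (z : ℂ)
    (hz : z = (((u₁ : ℂ) + Complex.I) / ((u₁ : ℂ) - Complex.I)) ^ (2 ^ (k - 1)))
    (hzi : z ≠ Complex.I) :
    (2 / (z - Complex.I) - Complex.I).im = 0 := by
  have hnorm : ‖z‖ = 1 := by
    rw [hz, norm_pow, ← ofReal_ratCast, norm_ofReal_add_I_div_sub_I, one_pow]
  rw [div_eq_mul_inv, sub_im, I_im, mul_im, im_inv_sub_I_of_norm_eq_one hnorm hzi]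
  norm_num

theorem u2_is_real (u₁ : ℚ) (h0 : u₁ ≠ 0) (k : ℕ) (hk : 1 ≤ k) (z : ℂ)
    (hz : z = (((u₁ : ℂ) + Complex.I) / ((u₁ : ℂ) - Complex.I)) ^ (2 ^ (k - 1)))
    (hzi : z ≠ Complex.I) :
    (2 / (z - Complex.I) - Complex.I).im = 0 :=
  u2_is_real_general u₁ k z hz hzi
end

section
/- If u₁ is rational and z = ((u₁ + i)/(u₁ − i))^(2^(k−1)) with z ≠ i, then u₂ = 2/(z − i) − i is a rational number, i.e., it lies in the image of ℚ in ℂ. -/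
/-!
The Cayley map `u ↦ (u + i)/(u - i)` sends `ℚ` into the rational points `c + d i` of the unit
circle, and these form a multiplicative monoid, so `z` is such a point. For `z = c + d i ≠ i` on
the circle, `2/(z - i) - i = c/(1 - d)` is the stereographic projection of `z` from `i`.
-/

open Complex

def ratUnitCircle : Submonoid ℂ where
  carrier := {z | ∃ c d : ℚ, c ^ 2 + d ^ 2 = 1 ∧ (c : ℂ) + d * I = z}
  one_mem' := ⟨1, 0, by norm_num, by simp⟩
  mul_mem' := by
    rintro _ _ ⟨a, b, hab, rfl⟩ ⟨c, d, hcd, rfl⟩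
    refine ⟨a * c - b * d, a * d + b * c, by linear_combination (a ^ 2 + b ^ 2) * hcd + hab, ?_⟩
    push_cast
    linear_combination (-(b : ℂ) * d) * I_sq

theorem cayley_mem_ratUnitCircle (u : ℚ) : ((u : ℂ) + I) / ((u : ℂ) - I) ∈ ratUnitCircle := by
  have hden : u ^ 2 + 1 ≠ 0 := by positivity
  have hdenC : (u : ℂ) ^ 2 + 1 ≠ 0 := by exact_mod_cast hden
  have hsub : (u : ℂ) - I ≠ 0 := fun h ↦ by simpa using congrArg im h
  refine ⟨(u ^ 2 - 1) / (u ^ 2 + 1), 2 * u / (u ^ 2 + 1), by field_simp; ring, ?_⟩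
  rw [eq_div_iff hsub]
  push_cast
  field_simp
  linear_combination (-2 * (u : ℂ)) * I_sq

theorem exists_rat_eq_stereographic_of_mem_ratUnitCircle {z : ℂ} (hz : z ∈ ratUnitCircle)
    (hzi : z ≠ I) : ∃ q : ℚ, 2 / (z - I) - I = q := by
  obtain ⟨c, d, hcd, rfl⟩ := hz
  have hd : d ≠ 1 := by
    rintro rfl
    have hc : c = 0 := by nlinarith
    exact hzi (by simp [hc])
  have h1d : (1 : ℂ) - d ≠ 0 := by exact_mod_cast sub_ne_zero.mpr hd.symm
  have hcdC : (c : ℂ) ^ 2 + (d : ℂ) ^ 2 = 1 := by exact_mod_cast hcd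
  refine ⟨c / (1 - d), ?_⟩
  rw [sub_eq_iff_eq_add, div_eq_iff (sub_ne_zero.mpr hzi)]
  push_cast
  field_simp
  linear_combination ((d : ℂ) ^ 2 - 2 * d + 1) * I_sq - hcdC

theorem u2_is_rational_general (u₁ : ℚ) (k : ℕ) (z : ℂ)
    (hz : z = (((u₁ : ℂ) + Complex.I) / ((u₁ : ℂ) - Complex.I)) ^ (2 ^ (k - 1)))
    (hzi : z ≠ Complex.I) :
    ∃ q : ℚ, 2 / (z - Complex.I) - Complex.I = (q : ℂ) := by
  subst hz
  exact exists_rat_eq_stereographic_of_mem_ratUnitCircle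
    (pow_mem (cayley_mem_ratUnitCircle u₁) _) hzi

theorem u2_is_rational (u₁ : ℚ) (h0 : u₁ ≠ 0) (k : ℕ) (hk : 1 ≤ k) (z : ℂ)
    (hz : z = (((u₁ : ℂ) + Complex.I) / ((u₁ : ℂ) - Complex.I)) ^ (2 ^ (k - 1)))
    (hzi : z ≠ Complex.I) :
    ∃ q : ℚ, 2 / (z - Complex.I) - Complex.I = (q : ℂ) :=
  u2_is_rational_general u₁ k z hz hzi
end

section
/- The series expansion of the arctangent: for all real x ≠ 0, arctan(x) = i · Σ_{m≥1} (1/(2m−1)) · (1/(1 + 2i/x)^(2m−1) − 1/(1 − 2i/x)^(2m−1)), where the series converges. -/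
/-! The two series are the odd part `∑ z ^ (2m+1) / (2m+1) = -log ((1 - z) / (1 + z)) / 2` of the
logarithmic series (the arctangent series at `I * z`), taken at `z = (1 + 2i/x)⁻¹` and at its
conjugate. The Cayley transform `(1 - z) / (1 + z)` of this `z` is `(1 + x i) / (1 + x²)`, so the
positive factor drops out of the difference of the logarithms, which leaves
`log (1 + x i) - log (1 - x i) = 2 i arg (1 + x i) = 2 i arctan x`. -/

open Complex ComplexConjugate

namespace Complex

theorem hasSum_odd_pow_div {z : ℂ} (hz : ‖z‖ < 1) :
    HasSum (fun m : ℕ => 1 / (2 * (m : ℂ) + 1) * z ^ (2 * m + 1))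
      (-log ((1 - z) / (1 + z)) / 2) := by
  have hIz : I * z * I = -z := by rw [mul_right_comm, I_mul_I, neg_one_mul]
  have hsum : -log ((1 - z) / (1 + z)) / 2 = -I * Complex.arctan (I * z) := by
    rw [Complex.arctan, hIz, sub_neg_eq_add, ← sub_eq_add_neg]
    ring_nf
    rw [I_sq]
    ring
  rw [hsum]
  refine ((hasSum_arctan (z := I * z) (by simpa using hz)).mul_left (-I)).congr_fun fun m => ?_
  have hI : (-1 : ℂ) ^ m * I ^ (2 * m + 1) = I := by
    rw [pow_succ, pow_mul, I_sq, ← mul_assoc, ← mul_pow, neg_one_mul, neg_neg, one_pow, one_mul]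
  rw [mul_pow, ← mul_assoc, hI]
  push_cast
  ring_nf
  rw [I_sq]
  ring

theorem norm_inv_one_add_lt_one {c : ℂ} (hre : 0 ≤ c.re) (hc : c ≠ 0) : ‖(1 + c)⁻¹‖ < 1 := by
  have hnormSq : 1 < normSq (1 + c) := by
    have hc_pos : 0 < normSq c := normSq_pos.2 hc
    rw [normSq_apply] at hc_pos ⊢
    simp only [add_re, one_re, add_im, one_im, zero_add]
    nlinarith
  rw [norm_inv]
  refine inv_lt_one_of_one_lt₀ ?_
  rw [← one_lt_sq_iff₀ (norm_nonneg _), Complex.sq_norm]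
  exact hnormSq

theorem arg_one_add_ofReal_mul_I (x : ℝ) : arg (1 + x * I) = Real.arctan x := by
  have hre : 0 < (1 + x * I).re := by simp
  have hbound := abs_lt.1 ((abs_arg_lt_pi_div_two_iff).2 (Or.inl hre))
  rw [← Real.arctan_tan hbound.1 hbound.2, tan_arg]
  simp

theorem log_sub_log_conj {u : ℂ} (hu : u.arg ≠ Real.pi) :
    log u - log (conj u) = 2 * arg u * I := by
  rw [log_conj u hu, sub_conj, log_im]
  push_cast
  ring

theorem log_one_add_ofReal_mul_I_sub_log_one_sub (x : ℝ) :
    log (1 + x * I) - log (1 - x * I) = 2 * Real.arctan x * I := by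
  have harg : arg (1 + x * I) ≠ Real.pi := by
    rw [arg_one_add_ofReal_mul_I]
    linarith [Real.arctan_lt_pi_div_two x, Real.pi_pos]
  have hconj : 1 - x * I = conj (1 + x * I) := by
    simp [sub_eq_add_neg]
  rw [hconj, log_sub_log_conj harg, arg_one_add_ofReal_mul_I]

theorem one_sub_div_one_add_inv_one_add_two_I_div {x : ℝ} (hx : x ≠ 0) :
    (1 - (1 + 2 * I / x)⁻¹) / (1 + (1 + 2 * I / x)⁻¹) = ((1 + x ^ 2)⁻¹ : ℝ) * (1 + x * I) := by
  have hx' : (x : ℂ) ≠ 0 := ofReal_ne_zero.2 hx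
  have hden : (x : ℂ) + 2 * I ≠ 0 := by
    intro h; simpa using congrArg im h
  have hden' : (x : ℂ) + 2 * I + x ≠ 0 := by
    intro h; simpa using congrArg im h
  have hnorm : (1 : ℂ) + x ^ 2 ≠ 0 := by exact_mod_cast (by positivity : (1 : ℝ) + x ^ 2 ≠ 0)
  have hinv : (1 + 2 * I / x)⁻¹ = x / (x + 2 * I) := by field_simp
  rw [hinv, one_sub_div hden, one_add_div hden, div_div_div_cancel_right₀ hden]
  push_cast
  field_simp
  linear_combination (-2 * x : ℂ) * I_sq

theorem one_sub_div_one_add_inv_one_sub_two_I_div {x : ℝ} (hx : x ≠ 0) :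
    (1 - (1 - 2 * I / x)⁻¹) / (1 + (1 - 2 * I / x)⁻¹) = ((1 + x ^ 2)⁻¹ : ℝ) * (1 - x * I) := by
  have h := one_sub_div_one_add_inv_one_add_two_I_div (neg_ne_zero.2 hx)
  simpa only [ofReal_neg, div_neg, ← sub_eq_add_neg, neg_sq, neg_mul] using h

end Complex

theorem arctan_series_complex (x : ℝ) (hx : x ≠ 0) :
    ∃ S : ℂ,
      HasSum (fun m : ℕ =>
        (1 / (2 * (m : ℂ) + 1)) *
          (((1 + 2 * Complex.I / (x : ℂ)) ^ (2 * m + 1))⁻¹ -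
            ((1 - 2 * Complex.I / (x : ℂ)) ^ (2 * m + 1))⁻¹)) S ∧
      Complex.I * S = ((Real.arctan x : ℝ) : ℂ) := by
  have hplus : ‖(1 + 2 * I / x)⁻¹‖ < 1 :=
    norm_inv_one_add_lt_one (by simp) (by simpa using hx)
  have hminus : ‖(1 - 2 * I / x)⁻¹‖ < 1 := by
    rw [sub_eq_add_neg]
    exact norm_inv_one_add_lt_one (by simp) (by simpa using hx)
  have hr : 0 < (1 + x ^ 2)⁻¹ := by positivity
  have hplus_ne : 1 + x * I ≠ 0 := by
    intro h; simpa using congrArg re h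
  have hminus_ne : 1 - x * I ≠ 0 := by
    intro h; simpa using congrArg re h
  refine ⟨_, ((hasSum_odd_pow_div hplus).sub (hasSum_odd_pow_div hminus)).congr_fun
    fun m => by simp only [inv_pow, mul_sub], ?_⟩
  rw [one_sub_div_one_add_inv_one_add_two_I_div hx,
    one_sub_div_one_add_inv_one_sub_two_I_div hx,
    log_ofReal_mul hr hplus_ne, log_ofReal_mul hr hminus_ne]
  linear_combination (-I / 2) * log_one_add_ofReal_mul_I_sub_log_one_sub x -
    (Real.arctan x : ℂ) * I_sq
end

section
/- Real form of the arctangent series: for real x ≠ 0, with c_m = (1 + 2i/x)^(2m−1), arctan(x) = 2·Σ_{m≥1} (1/(2m−1)) · Im(c_m) / (Re(c_m)² + Im(c_m)²). -/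
/-!
With `c = 1 + 2i/x`, the summand is `-Im (c⁻¹ ^ (2m+1)) / (2m+1)`, and `‖c⁻¹‖ < 1`.
Summing the `arcoth` series `∑ c^{-(2m+1)}/(2m+1) = ½ log ((c+1)/(c-1))` and noting
`(c+1)/(c-1) = 1 - x i`, the sum is `-½ arg (1 - x i) = ½ arctan x`.
-/

namespace Complex

lemma arg_eq_arctan_of_re_pos {z : ℂ} (hz : 0 < z.re) : arg z = Real.arctan (z.im / z.re) := by
  obtain ⟨hlo, hhi⟩ := abs_lt.mp (abs_arg_lt_pi_div_two_iff.mpr (Or.inl hz))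
  rw [← tan_arg, Real.arctan_tan hlo hhi]

lemma one_lt_norm_of_re_eq_one {z : ℂ} (hre : z.re = 1) (him : z.im ≠ 0) : 1 < ‖z‖ := by
  have : 1 < ‖z‖ ^ 2 := by
    rw [Complex.sq_norm, normSq_apply, hre]
    nlinarith [mul_self_pos.mpr him]
  nlinarith [norm_nonneg z]

lemma im_div_re_sq_add_im_sq (z : ℂ) : z.im / (z.re ^ 2 + z.im ^ 2) = -z⁻¹.im := by
  rw [inv_im, normSq_apply, neg_div, neg_neg, sq, sq]

/-- The Taylor series of `artanh`, obtained from that of `arctan` via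
`artanh w = i arctan (-i w)`. -/
lemma hasSum_pow_odd_div {w : ℂ} (hw : ‖w‖ < 1) :
    HasSum (fun n : ℕ => w ^ (2 * n + 1) / ↑(2 * n + 1)) (log ((1 + w) / (1 - w)) / 2) := by
  have hsum := (hasSum_arctan (z := -I * w) (by simpa using hw)).mul_left I
  have hval : I * arctan (-I * w) = log ((1 + w) / (1 - w)) / 2 := by
    rw [arctan, show -I * w * I = w by linear_combination (-w) * I_sq]
    linear_combination (-log ((1 + w) / (1 - w)) / 2) * I_sq
  refine hval ▸ hsum.congr_fun fun n => ?_
  have hsq : ((-1 : ℂ) ^ n) ^ 2 = 1 := by rw [← pow_mul, mul_comm, pow_mul, neg_one_sq, one_pow]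
  rw [mul_pow, pow_succ (-I), pow_mul (-I), neg_sq, I_sq]
  linear_combination (w ^ (2 * n + 1) / ↑(2 * n + 1)) * ((-1) ^ n) ^ 2 * I_sq -
    (w ^ (2 * n + 1) / ↑(2 * n + 1)) * hsq

lemma hasSum_inv_pow_odd_div {c : ℂ} (hc : 1 < ‖c‖) :
    HasSum (fun n : ℕ => (c ^ (2 * n + 1))⁻¹ / ↑(2 * n + 1))
      (log ((c + 1) / (c - 1)) / 2) := by
  have hc0 : c ≠ 0 := norm_pos_iff.mp (one_pos.trans hc)
  have hc1 : c - 1 ≠ 0 := sub_ne_zero.mpr fun h => by simp [h] at hc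
  have hratio : (1 + c⁻¹) / (1 - c⁻¹) = (c + 1) / (c - 1) := by field_simp
  have hw : ‖c⁻¹‖ < 1 := by simpa using inv_lt_one_of_one_lt₀ hc
  simpa only [hratio, inv_pow] using hasSum_pow_odd_div hw

end Complex

open Complex in
theorem arctan_series_real (x : ℝ) (hx : x ≠ 0) :
    HasSum (fun m : ℕ =>
      (1 / (2 * (m : ℝ) + 1)) *
        ((1 + 2 * Complex.I / (x : ℂ)) ^ (2 * m + 1)).im /
          (((1 + 2 * Complex.I / (x : ℂ)) ^ (2 * m + 1)).re ^ 2 +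
            ((1 + 2 * Complex.I / (x : ℂ)) ^ (2 * m + 1)).im ^ 2))
      (Real.arctan x / 2) := by
  set c : ℂ := 1 + 2 * I / x
  have hc : 1 < ‖c‖ := one_lt_norm_of_re_eq_one (by simp [c]) (by simp [c, hx])
  have hratio : (c + 1) / (c - 1) = 1 - x * I := by
    have hx' : (x : ℂ) ≠ 0 := by exact_mod_cast hx
    simp only [c]
    field_simp
    linear_combination 2 * (x : ℂ) * I_sq
  have hval : -(log ((c + 1) / (c - 1)) / 2).im = Real.arctan x / 2 := by
    rw [hratio, div_ofNat_im, log_im, arg_eq_arctan_of_re_pos (by simp)]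
    simp [neg_div]
  refine hval ▸ (hasSum_im (hasSum_inv_pow_odd_div hc)).neg.congr_fun fun n => ?_
  rw [mul_div_assoc, im_div_re_sq_add_im_sq, div_natCast_im]
  push_cast
  ring
end

section
/- Euler's arctangent series: for all real x, arctan(x) = Σ_{m≥0} (2^(2m) (m!)² / (2m+1)!) · x^(2m+1) / (1 + x²)^(m+1). -/
/-!
Put `I n = ∫ t in 0..x, t ^ (2n) / (1 + t²) ^ (n+1)` and `w n = 4 ^ n / centralBinom n`, so that
the `m`-th coefficient of the series is `w m / (2m+1)`. Differentiating
`t ^ (2m+1) / (1 + t²) ^ (m+1)` gives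
`x ^ (2m+1) / (1 + x²) ^ (m+1) = (2m+1) I m - (2m+2) I (m+1)`,
and `w (m+1) = (2m+2) / (2m+1) · w m`, so the `m`-th term is `w m · I m - w (m+1) · I (m+1)`.
The partial sums telescope to `I 0 - w n · I n = arctan x - w n · I n`, and the remainder vanishes
because `w n ≤ 2n + 1` while `|I n| ≤ q ^ n |x|` with `q = x² / (1 + x²) < 1`.
-/

open Real Filter Finset intervalIntegral Topology MeasureTheory

noncomputable def eulerIntegral (x : ℝ) (n : ℕ) : ℝ :=
  ∫ t in (0 : ℝ)..x, t ^ (2 * n) / (1 + t ^ 2) ^ (n + 1)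

noncomputable def eulerWeight (n : ℕ) : ℝ := 4 ^ n / n.centralBinom

lemma continuous_pow_div_one_add_sq_pow (n : ℕ) :
    Continuous fun t : ℝ => t ^ (2 * n) / (1 + t ^ 2) ^ (n + 1) :=
  by fun_prop (disch := intro t; positivity)

lemma hasDerivAt_pow_div_one_add_sq_pow (m : ℕ) (t : ℝ) :
    HasDerivAt (fun t : ℝ => t ^ (2 * m + 1) / (1 + t ^ 2) ^ (m + 1))
      ((2 * m + 1) * (t ^ (2 * m) / (1 + t ^ 2) ^ (m + 1)) -
        (2 * m + 2) * (t ^ (2 * (m + 1)) / (1 + t ^ 2) ^ (m + 1 + 1))) t := by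
  have hden : HasDerivAt (fun t : ℝ => (1 + t ^ 2) ^ (m + 1))
      ((m + 1 : ℕ) * (1 + t ^ 2) ^ m * (2 * t)) t := by
    simpa using ((hasDerivAt_pow 2 t).const_add 1).fun_pow (m + 1)
  have hnum : HasDerivAt (fun t : ℝ => t ^ (2 * m + 1)) ((2 * m + 1) * t ^ (2 * m)) t := by
    simpa using hasDerivAt_pow (2 * m + 1) t
  refine (hnum.fun_div hden (by positivity)).congr_deriv ?_
  field_simp
  push_cast
  ring

lemma eulerIntegral_zero (x : ℝ) : eulerIntegral x 0 = arctan x := by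
  simp [eulerIntegral]

lemma pow_div_one_add_sq_pow_eq (x : ℝ) (m : ℕ) :
    x ^ (2 * m + 1) / (1 + x ^ 2) ^ (m + 1) =
      (2 * m + 1) * eulerIntegral x m - (2 * m + 2) * eulerIntegral x (m + 1) := by
  have hint (k : ℕ) (c : ℝ) : IntervalIntegrable
      (fun t : ℝ => c * (t ^ (2 * k) / (1 + t ^ 2) ^ (k + 1))) volume 0 x :=
    (continuous_const.mul (continuous_pow_div_one_add_sq_pow k)).intervalIntegrable _ _
  have hFTC := integral_eq_sub_of_hasDerivAt (fun t _ => hasDerivAt_pow_div_one_add_sq_pow m t)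
    ((hint m _).sub (hint (m + 1) _))
  rw [integral_sub (hint m _) (hint (m + 1) _), intervalIntegral.integral_const_mul,
    intervalIntegral.integral_const_mul] at hFTC
  simpa [eulerIntegral] using hFTC.symm

lemma abs_eulerIntegral_le (x : ℝ) (n : ℕ) :
    |eulerIntegral x n| ≤ (x ^ 2 / (1 + x ^ 2)) ^ n * |x| := by
  have h := norm_integral_le_of_norm_le_const (a := 0) (b := x) (C := (x ^ 2 / (1 + x ^ 2)) ^ n)
    (f := fun t : ℝ => t ^ (2 * n) / (1 + t ^ 2) ^ (n + 1)) ?_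
  · simpa [eulerIntegral] using h
  intro t ht
  have ht2 : t ^ 2 ≤ x ^ 2 := by
    rcases Set.mem_uIoc.mp ht with ⟨h1, h2⟩ | ⟨h1, h2⟩ <;> nlinarith
  have hq : t ^ 2 / (1 + t ^ 2) ≤ x ^ 2 / (1 + x ^ 2) := by
    rw [div_le_div_iff₀ (by positivity) (by positivity)]; nlinarith
  calc ‖t ^ (2 * n) / (1 + t ^ 2) ^ (n + 1)‖ = (t ^ 2 / (1 + t ^ 2)) ^ n / (1 + t ^ 2) := by
        rw [div_pow, ← pow_mul, div_div, ← pow_succ,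
          Real.norm_of_nonneg (by rw [pow_mul]; positivity)]
    _ ≤ (t ^ 2 / (1 + t ^ 2)) ^ n := div_le_self (by positivity) (by nlinarith)
    _ ≤ (x ^ 2 / (1 + x ^ 2)) ^ n := by gcongr

lemma eulerWeight_zero : eulerWeight 0 = 1 := by simp [eulerWeight]

lemma eulerWeight_nonneg (n : ℕ) : 0 ≤ eulerWeight n := by unfold eulerWeight; positivity

lemma eulerWeight_le (n : ℕ) : eulerWeight n ≤ 2 * n + 1 := by
  rw [eulerWeight, div_le_iff₀ (by exact_mod_cast n.centralBinom_pos)]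
  exact_mod_cast Nat.four_pow_le_two_mul_add_one_mul_central_binom n

lemma eulerWeight_succ (n : ℕ) :
    eulerWeight (n + 1) = (2 * n + 2) / (2 * n + 1) * eulerWeight n := by
  have h : ((n : ℝ) + 1) * (n + 1).centralBinom = 2 * (2 * n + 1) * n.centralBinom := by
    exact_mod_cast Nat.succ_mul_centralBinom_succ n
  have := (n + 1).centralBinom_pos
  have := n.centralBinom_pos
  rw [eulerWeight, eulerWeight]
  field_simp
  linear_combination (-2 * 4 ^ n : ℝ) * h

lemma two_pow_mul_factorial_sq_div_factorial_eq (m : ℕ) :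
    (2 ^ (2 * m) * (m.factorial : ℝ) ^ 2 / ((2 * m + 1).factorial : ℝ)) =
      eulerWeight m / (2 * m + 1) := by
  have h := Nat.choose_mul_factorial_mul_factorial (show m ≤ 2 * m by omega)
  rw [show 2 * m - m = m by omega, ← Nat.centralBinom_eq_two_mul_choose] at h
  have h' : ((2 * m + 1).factorial : ℝ) = (2 * m + 1) * m.centralBinom * m.factorial ^ 2 := by
    rw [Nat.factorial_succ, ← h]; push_cast; ring
  have := m.centralBinom_pos
  have := m.factorial_pos
  rw [h', eulerWeight, pow_mul]
  field_simp
  norm_num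

lemma sum_range_eq_arctan_sub (x : ℝ) (n : ℕ) :
    ∑ m ∈ range n, eulerWeight m / (2 * m + 1) * x ^ (2 * m + 1) / (1 + x ^ 2) ^ (m + 1) =
      arctan x - eulerWeight n * eulerIntegral x n := by
  have hterm (m : ℕ) : eulerWeight m / (2 * m + 1) * x ^ (2 * m + 1) / (1 + x ^ 2) ^ (m + 1) =
      eulerWeight m * eulerIntegral x m - eulerWeight (m + 1) * eulerIntegral x (m + 1) := by
    rw [mul_div_assoc, pow_div_one_add_sq_pow_eq, eulerWeight_succ]
    field_simp
  rw [sum_congr rfl fun m _ => hterm m, sum_range_sub', eulerWeight_zero, eulerIntegral_zero,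
    one_mul]

lemma sq_div_one_add_sq_lt_one (x : ℝ) : x ^ 2 / (1 + x ^ 2) < 1 :=
  (div_lt_one (by positivity)).2 (by linarith)

lemma tendsto_eulerWeight_mul_eulerIntegral (x : ℝ) :
    Tendsto (fun n => eulerWeight n * eulerIntegral x n) atTop (𝓝 0) := by
  set q := x ^ 2 / (1 + x ^ 2)
  have hq : Tendsto (fun n : ℕ => (2 * (n * q ^ n) + q ^ n) * |x|) atTop (𝓝 0) := by
    simpa using (((tendsto_self_mul_const_pow_of_lt_one (by positivity)
      (sq_div_one_add_sq_lt_one x)).const_mul 2).add (tendsto_pow_atTop_nhds_zero_of_lt_one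
        (by positivity) (sq_div_one_add_sq_lt_one x))).mul_const |x|
  refine squeeze_zero_norm (fun n => ?_) hq
  rw [norm_mul, Real.norm_of_nonneg (eulerWeight_nonneg n), Real.norm_eq_abs]
  calc eulerWeight n * |eulerIntegral x n| ≤ (2 * n + 1) * (q ^ n * |x|) :=
        mul_le_mul (eulerWeight_le n) (abs_eulerIntegral_le x n) (abs_nonneg _) (by positivity)
    _ = (2 * (n * q ^ n) + q ^ n) * |x| := by ring

lemma abs_pow_div_one_add_sq_pow_le (x : ℝ) (m : ℕ) :
    |x ^ (2 * m + 1) / (1 + x ^ 2) ^ (m + 1)| ≤ |x| * (x ^ 2 / (1 + x ^ 2)) ^ m := by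
  have h : |x ^ (2 * m + 1) / (1 + x ^ 2) ^ (m + 1)| =
      |x| * (x ^ 2 / (1 + x ^ 2)) ^ m / (1 + x ^ 2) := by
    rw [abs_div, abs_pow, abs_pow, abs_of_pos (show (0 : ℝ) < 1 + x ^ 2 by positivity), pow_succ,
      pow_mul, sq_abs, div_pow]
    field_simp
    ring
  rw [h]
  exact div_le_self (by positivity) (by nlinarith)

lemma summable_norm_eulerSeries (x : ℝ) :
    Summable fun m : ℕ =>
      ‖eulerWeight m / (2 * m + 1) * x ^ (2 * m + 1) / (1 + x ^ 2) ^ (m + 1)‖ := by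
  refine Summable.of_nonneg_of_le (fun m => norm_nonneg _) (fun m => ?_)
    ((summable_geometric_of_lt_one (by positivity) (sq_div_one_add_sq_lt_one x)).mul_left |x|)
  have hc : eulerWeight m / (2 * m + 1) ≤ 1 := (div_le_one (by positivity)).2 (eulerWeight_le m)
  rw [mul_div_assoc, norm_mul, Real.norm_eq_abs, Real.norm_eq_abs,
    abs_of_nonneg (div_nonneg (eulerWeight_nonneg m) (by positivity))]
  exact (mul_le_of_le_one_left (abs_nonneg _) hc).trans (abs_pow_div_one_add_sq_pow_le x m)

theorem euler_arctan_series (x : ℝ) :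
    HasSum (fun m : ℕ =>
      (2 ^ (2 * m) * ((Nat.factorial m : ℝ)) ^ 2 / (Nat.factorial (2 * m + 1) : ℝ)) *
        x ^ (2 * m + 1) / (1 + x ^ 2) ^ (m + 1))
      (Real.arctan x) := by
  simp only [two_pow_mul_factorial_sq_div_factorial_eq]
  rw [hasSum_iff_tendsto_nat_of_summable_norm (summable_norm_eulerSeries x)]
  simp only [sum_range_eq_arctan_sub]
  simpa using tendsto_const_nhds.sub (tendsto_eulerWeight_mul_eulerIntegral x)
end
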